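/- Let p(z) = Π_{j=1}^n (z - w_j)^{μ_j} and write 1/p(z) = Σ_{j=1}^n Σ_{k=1}^{μ_j} c_{j,k}/(z - w_j)^k (partial fraction decomposition). Then the operator R_0^{(p)} on polynomials (defined by (R_0^{(p)}f)(z) = (f(z) - Z(z)V^{-1}C_w f)/p(z)) equals Σ_{j=1}^n Σ_{k=1}^{μ_j} c_{j,k} R_{w_j}^k, where (R_w f)(z) = (f(z) - f(w))/(z - w) is the backward shift at w. -/

import Mathlib

open Polynomial

/-- The backward shift at `w` on polynomials: `(R_w f)(z) = (f(z) - f(w))/(z - w)`. -/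
noncomputable def backShift (w : ℂ) (f : Polynomial ℂ) : Polynomial ℂ :=
  (f - C (f.eval w)) /ₘ (X - C w)

/-!
Write `S f = ∑ c_{j,k} R_{w_j}^{k+1} f` and `Q = f - p * S f`. Clearing denominators in the
partial fraction decomposition gives `∑ c_{j,k} p / (X - w_j)^{k+1} = 1`; since
`f - (X - w)^m R_w^m f` has degree `< m`, this shows `deg Q < N`. As `p ∣ f - Q`, the polynomial
`Q` has the same Hermite data `C_w f` as `f`. The confluent Vandermonde matrix `V` sends the
coefficient vector of a polynomial of degree `< N` to its Hermite data, and it is invertible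
because a polynomial of degree `< N` with vanishing Hermite data is divisible by `p`, hence zero.
So `Z V⁻¹ C_w f` is the unique interpolant of degree `< N` of that data, namely `Q`.
-/

open scoped Matrix

namespace Polynomial

theorem coeff_sum_fin_C_mul_X_pow {R : Type*} [Semiring R] {N : ℕ} (a : Fin N → R)
    (i : Fin N) :
    (∑ k : Fin N, C (a k) * X ^ (k : ℕ)).coeff i = a i := by
  simp [finsetSum_coeff, coeff_C_mul, coeff_X_pow, Fin.val_inj]

theorem degree_C_mul_X_sub_C_pow_le {R : Type*} [CommRing R] [IsDomain R] (a t : R) (m : ℕ) :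
    (C a * (X - C t) ^ m).degree ≤ (m : WithBot ℕ) := by
  rw [← smul_eq_C_mul]
  exact (degree_smul_le _ _).trans (by simp)

theorem X_sub_C_pow_dvd_iff_isRoot_iterate_derivative {R : Type*} [CommRing R] [IsDomain R]
    [CharZero R] {p : R[X]} {t : R} {n : ℕ} :
    (X - C t) ^ n ∣ p ↔ ∀ m < n, (derivative^[m] p).IsRoot t := by
  rcases eq_or_ne p 0 with rfl | hp
  · simp
  cases n with
  | zero => simp
  | succ n =>
    simp_rw [← le_rootMultiplicity_iff hp, Nat.add_one_le_iff, Nat.lt_add_one_iff,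
      lt_rootMultiplicity_iff_isRoot_iterate_derivative hp]

theorem sum_C_mul_eq_one_of_forall_eval {K ι : Type*} [Field K] [Infinite K] [Fintype ι]
    {p : K[X]} (hp : p ≠ 0) (q P : ι → K[X]) (a : ι → K) (hP : ∀ i, p = q i * P i)
    (h : ∀ z, p.eval z ≠ 0 → 1 / p.eval z = ∑ i, a i / (q i).eval z) :
    ∑ i, C (a i) * P i = 1 := by
  refine eq_of_infinite_eval_eq _ _
    ((finite_setOfPred_isRoot hp).infinite_compl.mono fun z hz ↦ ?_)
  have hz : p.eval z ≠ 0 := hz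
  have hPz : ∀ i, (P i).eval z = p.eval z / (q i).eval z := fun i ↦ by
    have hpz := congrArg (eval z) (hP i)
    rw [eval_mul] at hpz
    rw [eq_div_iff (left_ne_zero_of_mul (hpz ▸ hz)), hpz, mul_comm]
  calc (∑ i, C (a i) * P i).eval z = p.eval z * ∑ i, a i / (q i).eval z := by
        simp only [eval_finsetSum, eval_mul, eval_C, hPz, Finset.mul_sum]
        exact Finset.sum_congr rfl fun i _ ↦ by ring
    _ = eval z 1 := by rw [← h z hz, mul_one_div_cancel hz, eval_one]

end Polynomial

theorem X_sub_C_mul_backShift (w : ℂ) (f : ℂ[X]) :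
    (X - C w) * backShift w f = f - C (f.eval w) := by
  rw [backShift, mul_divByMonic_eq_iff_isRoot]
  simp

theorem degree_sub_X_sub_C_pow_mul_backShift_iterate_lt (w : ℂ) (f : ℂ[X]) (m : ℕ) :
    (f - (X - C w) ^ m * (backShift w)^[m] f).degree < (m : WithBot ℕ) := by
  induction m with
  | zero => simp
  | succ m ih =>
    set g := (backShift w)^[m] f
    have hstep : f - (X - C w) ^ (m + 1) * (backShift w)^[m + 1] f
        = (f - (X - C w) ^ m * g) + C (g.eval w) * (X - C w) ^ m := by
      rw [Function.iterate_succ_apply', pow_succ, mul_assoc, X_sub_C_mul_backShift]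
      ring
    rw [hstep, ← mem_degreeLT]
    refine add_mem (degreeLT_mono m.le_succ (mem_degreeLT.2 ih)) (mem_degreeLT.2 ?_)
    exact (degree_C_mul_X_sub_C_pow_le _ _ _).trans_lt (by exact_mod_cast m.lt_succ_self)

theorem degree_sub_mul_sum_backShift_iterate_lt {ι : Type*} [Fintype ι] (w : ι → ℂ)
    (m : ι → ℕ) (a : ι → ℂ) {p : ℂ[X]} (hp : p ≠ 0) (P : ι → ℂ[X])
    (hP : ∀ i, p = (X - C (w i)) ^ m i * P i)
    (hsum : ∑ i, C (a i) * P i = 1) (f : ℂ[X]) :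
    (f - p * ∑ i, C (a i) * (backShift (w i))^[m i] f).degree < p.degree := by
  set r := fun i ↦ f - (X - C (w i)) ^ m i * (backShift (w i))^[m i] f
  have hrem :
      f - p * ∑ i, C (a i) * (backShift (w i))^[m i] f = ∑ i, C (a i) * (P i * r i) := by
    conv_lhs => arg 1; rw [← one_mul f, ← hsum]
    simp only [r, Finset.mul_sum, Finset.sum_mul, ← Finset.sum_sub_distrib]
    refine Finset.sum_congr rfl fun i _ ↦ ?_
    rw [hP i]
    ring
  rw [hrem]
  refine (degree_sum_le _ _).trans_lt
    ((Finset.sup_lt_iff (bot_lt_iff_ne_bot.2 (degree_ne_bot.2 hp))).2 fun i _ ↦ ?_)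
  have hPi : P i ≠ 0 := right_ne_zero_of_mul (hP i ▸ hp)
  calc (C (a i) * (P i * r i)).degree ≤ (P i * r i).degree := by
        rw [← smul_eq_C_mul]; exact degree_smul_le _ _
    _ = (P i).degree + (r i).degree := degree_mul
    _ < (P i).degree + m i := WithBot.add_lt_add_left (degree_ne_bot.2 hPi)
          (degree_sub_X_sub_C_pow_mul_backShift_iterate_lt _ _ _)
    _ = p.degree := by rw [hP i, degree_mul, degree_pow, degree_X_sub_C, add_comm]; simp

section Hermite

variable {K ι : Type*} [Field K]

noncomputable def hermiteData (w : ι → K) (μ : ι → ℕ) : K[X] →ₗ[K] (Σ j, Fin (μ j)) → K where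
  toFun h jk := (derivative^[jk.2] h).eval (w jk.1)
  map_add' _ _ := by ext; simp [iterate_map_add]
  map_smul' _ _ := by ext; simp [iterate_derivative_smul]

variable [Fintype ι]

theorem hermiteData_eq_zero_iff_prod_dvd [CharZero K] {w : ι → K} (hw : Function.Injective w)
    (μ : ι → ℕ) (h : K[X]) :
    hermiteData w μ h = 0 ↔ (∏ j, (X - C (w j)) ^ μ j) ∣ h := by
  constructor
  · intro h0
    refine Fintype.prod_dvd_of_coprime (fun i j hij ↦ (pairwise_coprime_X_sub_C hw hij).pow)
      fun j ↦ X_sub_C_pow_dvd_iff_isRoot_iterate_derivative.2 fun k hk ↦ congrFun h0 ⟨j, k, hk⟩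
  · intro hdvd
    ext jk
    have hj : (X - C (w jk.1)) ^ μ jk.1 ∣ h :=
      (Finset.dvd_prod_of_mem (fun j ↦ (X - C (w j)) ^ μ j) (Finset.mem_univ jk.1)).trans hdvd
    exact X_sub_C_pow_dvd_iff_isRoot_iterate_derivative.1 hj _ jk.2.isLt

theorem eq_zero_of_hermiteData_eq_zero [CharZero K] {w : ι → K} (hw : Function.Injective w)
    {μ : ι → ℕ} {h : K[X]} (hdeg : h.degree < (∑ j, μ j : ℕ)) (h0 : hermiteData w μ h = 0) :
    h = 0 := by
  refine eq_zero_of_dvd_of_degree_lt ((hermiteData_eq_zero_iff_prod_dvd hw μ h).1 h0) ?_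
  simpa [degree_prod] using hdeg

theorem eq_of_hermiteData_eq [CharZero K] {w : ι → K} (hw : Function.Injective w) {μ : ι → ℕ}
    {g h : K[X]} (hg : g.degree < (∑ j, μ j : ℕ)) (hh : h.degree < (∑ j, μ j : ℕ))
    (hgh : hermiteData w μ g = hermiteData w μ h) : g = h :=
  sub_eq_zero.1 <| eq_zero_of_hermiteData_eq_zero hw
    ((degree_sub_le g h).trans_lt (max_lt hg hh)) (by rw [map_sub, hgh, sub_self])

variable {N : ℕ}

noncomputable def confluentVandermonde (w : ι → K) (μ : ι → ℕ)
    (e : (Σ j, Fin (μ j)) ≃ Fin N) :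
    Matrix (Σ j, Fin (μ j)) (Σ j, Fin (μ j)) K :=
  fun jk c ↦ hermiteData w μ (X ^ (e c : ℕ)) jk

theorem confluentVandermonde_mulVec (w : ι → K) (μ : ι → ℕ) (e : (Σ j, Fin (μ j)) ≃ Fin N)
    (v : (Σ j, Fin (μ j)) → K) :
    confluentVandermonde w μ e *ᵥ v
      = hermiteData w μ (∑ i : Fin N, C (v (e.symm i)) * X ^ (i : ℕ)) := by
  ext jk
  simp only [← e.sum_comp, Equiv.symm_apply_apply, ← smul_eq_C_mul, map_sum, map_smul,
    Finset.sum_apply, Pi.smul_apply, smul_eq_mul, Matrix.mulVec, dotProduct, confluentVandermonde,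
    mul_comm]

variable [DecidableEq ι] [CharZero K] {w : ι → K} {μ : ι → ℕ}

theorem isUnit_det_confluentVandermonde (hw : Function.Injective w) (hN : ∑ j, μ j = N)
    (e : (Σ j, Fin (μ j)) ≃ Fin N) : IsUnit (confluentVandermonde w μ e).det := by
  refine isUnit_iff_ne_zero.2 fun hdet ↦ ?_
  obtain ⟨v, hv, hVv⟩ := Matrix.exists_mulVec_eq_zero_iff.2 hdet
  have hpoly := eq_zero_of_hermiteData_eq_zero hw (hN ▸ degree_sum_fin_lt (v ∘ e.symm))
    ((confluentVandermonde_mulVec w μ e v).symm.trans hVv)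
  refine hv (funext fun c ↦ ?_)
  simpa only [coeff_sum_fin_C_mul_X_pow, Equiv.symm_apply_apply, coeff_zero, Pi.zero_apply] using
    congrArg (coeff · (e c)) hpoly

theorem hermiteData_sum_confluentVandermonde_inv_mulVec (hw : Function.Injective w)
    (hN : ∑ j, μ j = N) (e : (Σ j, Fin (μ j)) ≃ Fin N) (v : (Σ j, Fin (μ j)) → K) :
    hermiteData w μ
      (∑ i : Fin N, C (((confluentVandermonde w μ e)⁻¹ *ᵥ v) (e.symm i)) * X ^ (i : ℕ)) = v := by
  rw [← confluentVandermonde_mulVec, Matrix.mulVec_mulVec,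
    Matrix.mul_nonsing_inv _ (isUnit_det_confluentVandermonde hw hN e), Matrix.one_mulVec]

end Hermite

theorem R0p_eq_sum_backshifts_general (n N : ℕ) (w : Fin n → ℂ) (hw : Function.Injective w)
    (μ : Fin n → ℕ) (hN : ∑ j, μ j = N)
    (p : ℂ[X]) (hp : p = ∏ j, (X - C (w j)) ^ μ j)
    (e : ((j : Fin n) × Fin (μ j)) ≃ Fin N)
    (V : Matrix ((j : Fin n) × Fin (μ j)) ((j : Fin n) × Fin (μ j)) ℂ)
    (hV : ∀ jk c, V jk c =
      (Polynomial.derivative^[(jk.2 : ℕ)] (X ^ ((e c : Fin N) : ℕ) : ℂ[X])).eval (w jk.1))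
    (c : (j : Fin n) → Fin (μ j) → ℂ)
    (hc : ∀ z : ℂ, p.eval z ≠ 0 →
      1 / p.eval z = ∑ j, ∑ k : Fin (μ j), c j k / (z - w j) ^ ((k : ℕ) + 1)) :
    ∀ f : ℂ[X],
      ∀ Cw : ((j : Fin n) × Fin (μ j)) → ℂ,
      (∀ jk, Cw jk = (Polynomial.derivative^[(jk.2 : ℕ)] f).eval (w jk.1)) →
      f - ∑ i : Fin N, C (V⁻¹.mulVec Cw (e.symm i)) * X ^ (i : ℕ)
        = p * ∑ j, ∑ k : Fin (μ j), C (c j k) * (backShift (w j))^[(k : ℕ) + 1] f := by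
  intro f Cw hCw
  obtain rfl : V = confluentVandermonde w μ e := Matrix.ext hV
  obtain rfl : Cw = hermiteData w μ f := funext hCw
  have hp0 : p ≠ 0 :=
    hp ▸ Finset.prod_ne_zero_iff.2 fun j _ ↦ pow_ne_zero _ (X_sub_C_ne_zero _)
  have hdvd (jk : Σ j, Fin (μ j)) : (X - C (w jk.1)) ^ ((jk.2 : ℕ) + 1) ∣ p := by
    rw [hp]
    exact (pow_dvd_pow _ jk.2.isLt).trans
      (Finset.dvd_prod_of_mem (fun j ↦ (X - C (w j)) ^ μ j) (Finset.mem_univ jk.1))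
  choose P hP using hdvd
  have hdeg : p.degree = (∑ j, μ j : ℕ) := by simp [hp, degree_prod]
  have hsum : ∑ jk : (Σ j, Fin (μ j)), C (c jk.1 jk.2) * P jk = 1 :=
    sum_C_mul_eq_one_of_forall_eval hp0 _ P _ hP fun z hz ↦ by
      simpa [Fintype.sum_sigma] using hc z hz
  set Sf := ∑ j, ∑ k : Fin (μ j), C (c j k) * (backShift (w j))^[(k : ℕ) + 1] f
  have hQ : (f - p * Sf).degree < (∑ j, μ j : ℕ) := by
    have := degree_sub_mul_sum_backShift_iterate_lt (fun jk : Σ j, Fin (μ j) ↦ w jk.1)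
      (fun jk ↦ (jk.2 : ℕ) + 1) (fun jk ↦ c jk.1 jk.2) hp0 P hP hsum f
    rwa [Fintype.sum_sigma, hdeg] at this
  have hpSf : hermiteData w μ (p * Sf) = 0 :=
    (hermiteData_eq_zero_iff_prod_dvd hw μ _).2 (hp ▸ dvd_mul_right _ _)
  suffices hinterp : ∑ i : Fin N,
      C (((confluentVandermonde w μ e)⁻¹ *ᵥ hermiteData w μ f) (e.symm i)) * X ^ (i : ℕ)
        = f - p * Sf by
    rw [hinterp, sub_sub_cancel]
  refine eq_of_hermiteData_eq hw (by rw [hN]; exact degree_sum_fin_lt _) hQ ?_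
  rw [hermiteData_sum_confluentVandermonde_inv_mulVec hw hN, map_sub, hpSf, sub_zero]

/-- If `1/p(z) = ∑_j ∑_{k=1}^{μ_j} c_{j,k}/(z - w_j)^k` is the partial fraction
decomposition of `1/p`, then the operator `R_0^{(p)} f = (f - Z V⁻¹ C_w f)/p` equals
`∑_j ∑_k c_{j,k} R_{w_j}^k` on polynomials. -/
theorem R0p_eq_sum_backshifts (n N : ℕ) (w : Fin n → ℂ) (hw : Function.Injective w)
    (μ : Fin n → ℕ) (hμ : ∀ j, 1 ≤ μ j) (hN : ∑ j, μ j = N)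
    (p : ℂ[X]) (hp : p = ∏ j, (X - C (w j)) ^ μ j)
    (e : ((j : Fin n) × Fin (μ j)) ≃ Fin N)
    (V : Matrix ((j : Fin n) × Fin (μ j)) ((j : Fin n) × Fin (μ j)) ℂ)
    (hV : ∀ jk c, V jk c =
      (Polynomial.derivative^[(jk.2 : ℕ)] (X ^ ((e c : Fin N) : ℕ) : ℂ[X])).eval (w jk.1))
    (c : (j : Fin n) → Fin (μ j) → ℂ)
    (hc : ∀ z : ℂ, p.eval z ≠ 0 →
      1 / p.eval z = ∑ j, ∑ k : Fin (μ j), c j k / (z - w j) ^ ((k : ℕ) + 1)) :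
    ∀ f : ℂ[X],
      ∀ Cw : ((j : Fin n) × Fin (μ j)) → ℂ,
      (∀ jk, Cw jk = (Polynomial.derivative^[(jk.2 : ℕ)] f).eval (w jk.1)) →
      f - ∑ i : Fin N, C (V⁻¹.mulVec Cw (e.symm i)) * X ^ (i : ℕ)
        = p * ∑ j, ∑ k : Fin (μ j), C (c j k) * (backShift (w j))^[(k : ℕ) + 1] f :=
  R0p_eq_sum_backshifts_general n N w hw μ hN p hp e V hV c hc
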